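/- arXiv:1602.06755 — 2 statements merged into one kernel-verified Lean document; each statement's English description precedes it below -/
import Mathlib

section
/- Let $X$ be a metric space and $c:[a,b]\to X$ an absolutely continuous rectifiable curve with length function $s\in W^{1,1}([a,b])$. Then for almost every $t\in[a,b]$, $s'(t)=\lim_{\epsilon\to 0}\frac{d(c(t),c(t+\epsilon))}{|\epsilon|}$, and $\ell(c)=\int_a^b s'(t)\,dt$. -/
/-!
The length function dominates the curve, `d(c t, c u) ≤ s u - s t` for `t ≤ u`, so `c` is
absolutely continuous and `d(c t, c (t + ε)) / |ε|` is bounded above by the difference quotient of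
`s`, which tends to `s' t` at Lebesgue points. For the lower bound take a countable dense subset `T`
of the image: each `t ↦ d(c t, x)`, `x ∈ T`, is absolutely continuous, and its derivative is
bounded by the metric ratio, so `m := sup_{x ∈ T} |∂ₜ d(c t, x)| ≤ s'` a.e. Conversely
`d(c t, c u) = sup_{x ∈ T} |d(c u, x) - d(c t, x)| ≤ ∫_t^u m`, hence
`ℓ(c) ≤ ∫ m ≤ ∫ s' = ℓ(c)` and `m = s'` a.e.; there the ratio is squeezed between `m` and `s'`.
-/

open Set MeasureTheory Filter Topology
open scoped ENNReal NNReal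

noncomputable def curveLength {X : Type*} [MetricSpace X] (c : ℝ → X) (s : Set ℝ) : ℝ≥0∞ :=
  eVariationOn c s

theorem HasDerivAt.tendsto_norm_sub_div_abs {E : Type*} [NormedAddCommGroup E] [NormedSpace ℝ E]
    {f : ℝ → E} {v : E} {t : ℝ} (h : HasDerivAt f v t) :
    Tendsto (fun ε => ‖f (t + ε) - f t‖ / |ε|) (𝓝[≠] 0) (𝓝 ‖v‖) := by
  simpa [norm_smul, div_eq_inv_mul] using h.tendsto_slope_zero.norm

section
variable {X Y : Type*} [PseudoMetricSpace X] [PseudoMetricSpace Y] {a b : ℝ}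

theorem AbsolutelyContinuousOnInterval.of_dist_le {f : ℝ → X} {g : ℝ → Y}
    (hg : AbsolutelyContinuousOnInterval g a b)
    (h : ∀ t ∈ uIcc a b, ∀ u ∈ uIcc a b, dist (f t) (f u) ≤ dist (g t) (g u)) :
    AbsolutelyContinuousOnInterval f a b := by
  refine squeeze_zero' (.of_forall fun _ => Finset.sum_nonneg fun _ _ => dist_nonneg) ?_ hg
  filter_upwards [mem_inf_of_right (mem_principal_self _)] with E hE
  exact Finset.sum_le_sum fun i hi => h _ (hE.1 i hi).1 _ (hE.1 i hi).2

theorem AbsolutelyContinuousOnInterval.enorm_sub_le_lintegral_enorm_deriv {f : ℝ → ℝ}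
    (hf : AbsolutelyContinuousOnInterval f a b) (hab : a ≤ b) :
    ‖f b - f a‖ₑ ≤ ∫⁻ x in Ioc a b, ‖deriv f x‖ₑ := by
  rw [← hf.integral_deriv_eq_sub, intervalIntegral.integral_of_le hab]
  exact enorm_integral_le_lintegral_enorm _

theorem AbsolutelyContinuousOnInterval.dist_const {c : ℝ → X}
    (hc : AbsolutelyContinuousOnInterval c a b) (x : X) :
    AbsolutelyContinuousOnInterval (fun u => dist (c u) x) a b :=
  hc.of_dist_le fun _ _ _ _ => abs_dist_sub_le _ _ _

theorem edist_le_iSup_enorm_dist_sub {ι : Type*} {x : ι → X} {q : X}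
    (hq : q ∈ closure (range x)) (p : X) :
    edist p q ≤ ⨆ i, ‖dist q (x i) - dist p (x i)‖ₑ := by
  set M := ⨆ i, ‖dist q (x i) - dist p (x i)‖ₑ
  have hrange : range x ⊆ {z | ‖dist q z - dist p z‖ₑ ≤ M} :=
    range_subset_iff.2 fun i => le_iSup (fun i => ‖dist q (x i) - dist p (x i)‖ₑ) i
  have := closure_minimal hrange (isClosed_le (by fun_prop) continuous_const) hq
  simpa [edist_dist, Real.enorm_eq_ofReal_abs, dist_comm q p] using this

theorem eVariationOn_Icc_le_lintegral {f : ℝ → X} {m : ℝ → ℝ≥0∞}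
    (h : ∀ t ∈ Icc a b, ∀ u ∈ Icc a b, t ≤ u → edist (f t) (f u) ≤ ∫⁻ x in Ioc t u, m x) :
    eVariationOn f (Icc a b) ≤ ∫⁻ x in Ioc a b, m x := by
  refine iSup_le fun ⟨n, u, hu, us⟩ => ?_
  have hsum : ∀ k, ∑ i ∈ Finset.range k, ∫⁻ x in Ioc (u i) (u (i + 1)), m x =
      ∫⁻ x in Ioc (u 0) (u k), m x := by
    intro k
    induction k with
    | zero => simp
    | succ k ih =>
      rw [Finset.sum_range_succ, ih, ← lintegral_union measurableSet_Ioc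
        (Ioc_disjoint_Ioc_of_le le_rfl), Ioc_union_Ioc_eq_Ioc (hu k.zero_le) (hu k.le_succ)]
  calc ∑ i ∈ Finset.range n, edist (f (u (i + 1))) (f (u i))
      ≤ ∑ i ∈ Finset.range n, ∫⁻ x in Ioc (u i) (u (i + 1)), m x :=
        Finset.sum_le_sum fun i _ => by
          rw [edist_comm]; exact h _ (us i) _ (us (i + 1)) (hu i.le_succ)
    _ = ∫⁻ x in Ioc (u 0) (u n), m x := hsum n
    _ ≤ ∫⁻ x in Ioc a b, m x := lintegral_mono_set (Ioc_subset_Ioc (us 0).1 (us n).2)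

theorem AbsolutelyContinuousOnInterval.eVariationOn_le_lintegral_iSup_enorm_deriv {c : ℝ → X}
    (hc : AbsolutelyContinuousOnInterval c a b) (hab : a ≤ b) {T : Set X}
    (hT : c '' Icc a b ⊆ closure T) :
    eVariationOn c (Icc a b) ≤ ∫⁻ t in Ioc a b, ⨆ x : T, ‖deriv (fun u => dist (c u) x) t‖ₑ := by
  refine eVariationOn_Icc_le_lintegral fun t ht u hu htu => ?_
  have hcu : c u ∈ closure (range ((↑) : T → X)) := by simpa using hT ⟨u, hu, rfl⟩
  refine (edist_le_iSup_enorm_dist_sub hcu _).trans (iSup_le fun x => ?_)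
  have hsub : uIcc t u ⊆ uIcc a b := by
    rw [uIcc_of_le hab]; exact uIcc_subset_Icc ht hu
  exact (((hc.dist_const x).mono hsub).enorm_sub_le_lintegral_enorm_deriv htu).trans
    (lintegral_mono fun r => le_iSup (fun x : T => ‖deriv (fun u => dist (c u) x) r‖ₑ) x)


theorem dist_le_toReal_eVariationOn_sub {f : ℝ → X} {t u : ℝ}
    (hfin : eVariationOn f (Icc a u) ≠ ⊤) (hat : a ≤ t) (htu : t ≤ u) :
    dist (f t) (f u) ≤ (eVariationOn f (Icc a u)).toReal - (eVariationOn f (Icc a t)).toReal := by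
  have hsplit : eVariationOn f (Icc a t) + eVariationOn f (Icc t u) = eVariationOn f (Icc a u) := by
    simpa using eVariationOn.Icc_add_Icc f (s := univ) hat htu (mem_univ t)
  rw [← hsplit] at hfin ⊢
  rw [ENNReal.toReal_add (ENNReal.add_ne_top.1 hfin).1 (ENNReal.add_ne_top.1 hfin).2,
    add_sub_cancel_left, dist_edist]
  exact ENNReal.toReal_mono (ENNReal.add_ne_top.1 hfin).2
    (eVariationOn.edist_le f (left_mem_Icc.2 htu) (right_mem_Icc.2 htu))
end

theorem MeasureTheory.ae_eq_ofReal_of_ae_le_of_ofReal_integral_le {α : Type*} [MeasurableSpace α]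
    {μ : Measure α} {m : α → ℝ≥0∞} {g : α → ℝ} (hg : Integrable g μ)
    (hle : ∀ᵐ x ∂μ, 0 ≤ g x ∧ m x ≤ ENNReal.ofReal (g x))
    (hint : ENNReal.ofReal (∫ x, g x ∂μ) ≤ ∫⁻ x, m x ∂μ) :
    m =ᵐ[μ] fun x => ENNReal.ofReal (g x) := by
  have hlint : ∫⁻ x, ENNReal.ofReal (g x) ∂μ = ENNReal.ofReal (∫ x, g x ∂μ) :=
    (ofReal_integral_eq_lintegral_ofReal hg (hle.mono fun _ hx => hx.1)).symm
  refine ae_eq_of_ae_le_of_lintegral_le (hle.mono fun _ hx => hx.2) ?_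
    hg.aemeasurable.ennreal_ofReal (hlint ▸ hint)
  exact ((lintegral_mono_ae (hle.mono fun _ hx => hx.2)).trans_lt
    (hlint ▸ ENNReal.ofReal_lt_top)).ne

section
variable {X : Type*} [PseudoMetricSpace X] {c : ℝ → X} {S : ℝ → ℝ} {t v : ℝ}

theorem eventually_dist_div_abs_le_slope {a b : ℝ} (ht : t ∈ Ioo a b)
    (hdom : ∀ t ∈ Icc a b, ∀ u ∈ Icc a b, t ≤ u → dist (c t) (c u) ≤ S u - S t) :
    ∀ᶠ ε in 𝓝[≠] 0, dist (c t) (c (t + ε)) / |ε| ≤ ε⁻¹ * (S (t + ε) - S t) := by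
  have hmem : ∀ᶠ ε in 𝓝[≠] (0 : ℝ), t + ε ∈ Icc a b := by
    have : Tendsto (fun ε => t + ε) (𝓝 0) (𝓝 t) := by
      simpa using (continuous_const_add t).tendsto 0
    exact nhdsWithin_le_nhds (this.eventually (Icc_mem_nhds ht.1 ht.2))
  filter_upwards [hmem, self_mem_nhdsWithin] with ε hε hne
  have htI := Ioo_subset_Icc_self ht
  rcases lt_or_gt_of_ne hne with hneg | hpos
  · have h := hdom _ hε _ htI (by linarith)
    calc dist (c t) (c (t + ε)) / |ε| ≤ (S t - S (t + ε)) / -ε := by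
          rw [abs_of_neg hneg, dist_comm]; gcongr; linarith
      _ = ε⁻¹ * (S (t + ε) - S t) := by field_simp; ring
  · have h := hdom _ htI _ hε (by linarith)
    calc dist (c t) (c (t + ε)) / |ε| ≤ (S (t + ε) - S t) / ε := by
          rw [abs_of_pos hpos]; gcongr
      _ = ε⁻¹ * (S (t + ε) - S t) := by ring

theorem dist_le_dist_of_dist_le_sub {s : Set ℝ}
    (h : ∀ t ∈ s, ∀ u ∈ s, t ≤ u → dist (c t) (c u) ≤ S u - S t) :
    ∀ t ∈ s, ∀ u ∈ s, dist (c t) (c u) ≤ dist (S t) (S u) := by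
  have hsub : ∀ t u, S u - S t ≤ dist (S t) (S u) := fun t u => by
    rw [Real.dist_eq, abs_sub_comm]; exact le_abs_self _
  intro t ht u hu
  rcases le_total t u with htu | hut
  · exact (h t ht u hu htu).trans (hsub t u)
  · rw [dist_comm, dist_comm (S t)]
    exact (h u hu t ht hut).trans (hsub u t)

theorem nonneg_of_le_slope (hS : HasDerivAt S v t)
    (hup : ∀ᶠ ε in 𝓝[≠] 0, dist (c t) (c (t + ε)) / |ε| ≤ ε⁻¹ * (S (t + ε) - S t)) : 0 ≤ v :=
  ge_of_tendsto hS.tendsto_slope_zero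
    (hup.mono fun ε hε => (div_nonneg dist_nonneg (abs_nonneg ε)).trans hε)

variable {ι : Type*} {f : ι → ℝ → ℝ}

theorem iSup_enorm_deriv_le_of_le_slope (hS : HasDerivAt S v t)
    (hup : ∀ᶠ ε in 𝓝[≠] 0, dist (c t) (c (t + ε)) / |ε| ≤ ε⁻¹ * (S (t + ε) - S t))
    (hf : ∀ i, DifferentiableAt ℝ (f i) t) (hlip : ∀ i u, |f i u - f i t| ≤ dist (c t) (c u)) :
    ⨆ i, ‖deriv (f i) t‖ₑ ≤ ENNReal.ofReal v := by
  refine iSup_le fun i => ?_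
  rw [Real.enorm_eq_ofReal_abs]
  refine ENNReal.ofReal_le_ofReal (le_of_tendsto_of_tendsto
    (hf i).hasDerivAt.tendsto_norm_sub_div_abs hS.tendsto_slope_zero ?_)
  filter_upwards [hup] with ε hε
  exact (div_le_div_of_nonneg_right (hlip i _) (abs_nonneg ε)).trans hε

theorem tendsto_dist_div_abs_of_le_slope (hS : HasDerivAt S v t)
    (hup : ∀ᶠ ε in 𝓝[≠] 0, dist (c t) (c (t + ε)) / |ε| ≤ ε⁻¹ * (S (t + ε) - S t))
    (hf : ∀ i, DifferentiableAt ℝ (f i) t) (hlip : ∀ i u, |f i u - f i t| ≤ dist (c t) (c u))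
    (hv : ENNReal.ofReal v ≤ ⨆ i, ‖deriv (f i) t‖ₑ) :
    Tendsto (fun ε => dist (c t) (c (t + ε)) / |ε|) (𝓝[≠] 0) (𝓝 v) := by
  refine tendsto_order.2 ⟨fun p hp => ?_, fun p hp => ?_⟩
  · rcases lt_or_ge p 0 with hp0 | hp0
    · exact .of_forall fun ε => hp0.trans_le (by positivity)
    obtain ⟨i, hi⟩ :=
      lt_iSup_iff.1 (((ENNReal.ofReal_lt_ofReal_iff_of_nonneg hp0).2 hp).trans_le hv)
    rw [Real.enorm_eq_ofReal_abs, ENNReal.ofReal_lt_ofReal_iff_of_nonneg hp0] at hi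
    filter_upwards [(hf i).hasDerivAt.tendsto_norm_sub_div_abs.eventually (eventually_gt_nhds hi)]
      with ε hε
    exact hε.trans_le (div_le_div_of_nonneg_right (hlip i _) (abs_nonneg ε))
  · filter_upwards [hup, hS.tendsto_slope_zero.eventually (eventually_lt_nhds hp)] with ε h1 h2
    exact h1.trans_lt h2

end

theorem ae_tendsto_dist_div_abs_of_dist_le_integral {X : Type*} [PseudoMetricSpace X]
    {c : ℝ → X} {g : ℝ → ℝ} {a b : ℝ} (hab : a ≤ b) (hc : ContinuousOn c (Icc a b))
    (hg : IntegrableOn g (Icc a b))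
    (hdom : ∀ t ∈ Icc a b, ∀ u ∈ Icc a b, t ≤ u →
      dist (c t) (c u) ≤ (∫ r in a..u, g r) - ∫ r in a..t, g r)
    (hlen : ENNReal.ofReal (∫ r in a..b, g r) ≤ eVariationOn c (Icc a b)) :
    ∀ᵐ t ∂volume.restrict (Icc a b),
      Tendsto (fun ε => dist (c t) (c (t + ε)) / |ε|) (𝓝[≠] 0) (𝓝 (g t)) := by
  have hg' : IntervalIntegrable g volume a b :=
    (intervalIntegrable_iff_integrableOn_Icc_of_le hab).2 hg
  set S : ℝ → ℝ := fun t => ∫ r in a..t, g r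
  have hcAC : AbsolutelyContinuousOnInterval c a b := by
    refine (hg'.absolutelyContinuousOnInterval_intervalIntegral left_mem_uIcc).of_dist_le ?_
    rw [uIcc_of_le hab]
    exact dist_le_dist_of_dist_le_sub hdom
  obtain ⟨T, hTc, hT⟩ := (isCompact_Icc.image_of_continuousOn hc).isSeparable
  have := hTc.to_subtype
  set f : T → ℝ → ℝ := fun x u => dist (c u) x
  have hfAC : ∀ x : T, AbsolutelyContinuousOnInterval (f x) a b := fun x => hcAC.dist_const x
  have hlip : ∀ t x u, |f x u - f x t| ≤ dist (c t) (c u) := fun t x u =>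
    dist_comm (c t) (c u) ▸ abs_dist_sub_le _ _ _
  set m : ℝ → ℝ≥0∞ := fun t => ⨆ x : T, ‖deriv (f x) t‖ₑ
  have hgood : ∀ᵐ t ∂volume.restrict (Ioo a b), (0 ≤ g t ∧ m t ≤ ENNReal.ofReal (g t)) ∧
      (ENNReal.ofReal (g t) ≤ m t →
        Tendsto (fun ε => dist (c t) (c (t + ε)) / |ε|) (𝓝[≠] 0) (𝓝 (g t))) := by
    filter_upwards [ae_restrict_mem measurableSet_Ioo, ae_restrict_of_ae hg'.ae_hasDerivAt_integral,
      ae_restrict_of_ae (ae_all_iff.2 fun x => (hfAC x).ae_differentiableAt)] with t ht hSt hft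
    have htI : t ∈ uIcc a b := uIcc_of_le hab ▸ Ioo_subset_Icc_self ht
    have hSt : HasDerivAt S (g t) t := hSt htI a left_mem_uIcc
    have hft : ∀ x, DifferentiableAt ℝ (f x) t := fun x => hft x htI
    have hup := eventually_dist_div_abs_le_slope ht hdom
    exact ⟨⟨nonneg_of_le_slope hSt hup, iSup_enorm_deriv_le_of_le_slope hSt hup hft (hlip t)⟩,
      tendsto_dist_div_abs_of_le_slope hSt hup hft (hlip t)⟩
  have hvar : eVariationOn c (Icc a b) ≤ ∫⁻ t in Ioc a b, m t :=
    hcAC.eVariationOn_le_lintegral_iSup_enorm_deriv hab hT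
  have hm : m =ᵐ[volume.restrict (Ioo a b)] fun t => ENNReal.ofReal (g t) := by
    refine ae_eq_ofReal_of_ae_le_of_ofReal_integral_le (hg.mono_set Ioo_subset_Icc_self)
      (hgood.mono fun _ h => h.1) ?_
    calc ENNReal.ofReal (∫ t in Ioo a b, g t) = ENNReal.ofReal (∫ t in a..b, g t) := by
          rw [intervalIntegral.integral_of_le hab, integral_Ioc_eq_integral_Ioo]
      _ ≤ eVariationOn c (Icc a b) := hlen
      _ ≤ ∫⁻ t in Ioc a b, m t := hvar
      _ = ∫⁻ t in Ioo a b, m t := setLIntegral_congr Ioo_ae_eq_Ioc.symm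
  rw [Measure.restrict_congr_set Ioo_ae_eq_Icc.symm]
  filter_upwards [hgood, hm] with t ht hmt using ht.2 hmt.ge

/-- If `c : [a,b] → X` is an absolutely continuous rectifiable curve, i.e.
its length function `s(t) = ℓ(c|_{[a,t]})` is in `W^{1,1}([a,b])` (formalized: `s` has an
integrable density `s'` with `s t = ∫_a^t s'`), then for almost every `t ∈ [a,b]` the
metric derivative `lim_{ε→0} d(c(t), c(t+ε))/|ε|` exists and equals `s'(t)`, and
`ℓ(c) = ∫_a^b s'(t) dt`. -/
theorem abs_continuous_curve_metric_derivative
    {X : Type*} [MetricSpace X] (a b : ℝ) (hab : a ≤ b) (c : ℝ → X)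
    (hc : ContinuousOn c (Icc a b))
    (hrect : curveLength c (Icc a b) < ⊤)
    (s : ℝ → ℝ) (hs : ∀ t ∈ Icc a b, s t = (curveLength c (Icc a t)).toReal)
    (s' : ℝ → ℝ) (hs'int : IntegrableOn s' (Icc a b))
    (hac : ∀ t ∈ Icc a b, s t = ∫ r in a..t, s' r) :
    (∀ᵐ t ∂(volume.restrict (Icc a b)),
        Tendsto (fun ε : ℝ => dist (c t) (c (t + ε)) / |ε|) (𝓝[≠] 0) (𝓝 (s' t))) ∧
      curveLength c (Icc a b) = ENNReal.ofReal (∫ t in a..b, s' t) := by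
  have hb : b ∈ Icc a b := right_mem_Icc.2 hab
  have hlen : curveLength c (Icc a b) = ENNReal.ofReal (∫ t in a..b, s' t) := by
    rw [← hac b hb, hs b hb, ENNReal.ofReal_toReal hrect.ne]
  refine ⟨ae_tendsto_dist_div_abs_of_dist_le_integral hab hc hs'int
    (fun t ht u hu htu => ?_) hlen.ge, hlen⟩
  rw [← hac u hu, ← hac t ht, hs u hu, hs t ht]
  exact dist_le_toReal_eVariationOn_sub
    ((eVariationOn.mono c (Icc_subset_Icc_right hu.2)).trans_lt hrect).ne ht.1 htu
end

section
/- Let $K$ be a compact connected metric space with $\mathcal H^1(K)<\infty$. Then $K$ is a Peano continuum, i.e. $K$ is locally connected. -/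
open Set Function MeasureTheory Metric Filter Topology
open scoped ENNReal

/-! Given `x` and `r > 0` with `closedBall x r ≠ univ`, boundary bumping shows that every
component of `closedBall x r` meeting `ball x (r / 2)` reaches the sphere of radius `r`, so its
diameter, and hence its `μH[1]`-measure, is at least `r / 2`. These components are closed and
pairwise disjoint, so finiteness of `μH[1]` allows only finitely many of them; deleting all but the
component of `x` from `ball x (r / 2)` leaves a neighbourhood of `x` inside that component. -/

theorem IsPreconnected.ediam_le_hausdorffMeasure_one {X : Type*} [MetricSpace X]
    [MeasurableSpace X] [BorelSpace X] {s : Set X} (hs : IsPreconnected s) :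
    ediam s ≤ μH[1] s := by
  refine ediam_le fun y hy z hz => ?_
  have hf : LipschitzWith 1 (dist y) := LipschitzWith.dist_right y
  have hIcc : Icc 0 (dist y z) ⊆ dist y '' s :=
    (hs.image _ hf.continuous.continuousOn).Icc_subset ⟨y, hy, dist_self y⟩ ⟨z, hz, rfl⟩
  calc edist y z = volume (Icc 0 (dist y z)) := by simp [edist_dist]
    _ = μH[1] (Icc 0 (dist y z)) := by rw [hausdorffMeasure_real]
    _ ≤ μH[1] (dist y '' s) := measure_mono hIcc
    _ ≤ μH[1] s := by simpa using hf.hausdorffMeasure_image_le zero_le_one s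

protected theorem IsClosed.connectedComponentIn {X : Type*} [TopologicalSpace X] {F : Set X}
    (hF : IsClosed F) (x : X) : IsClosed (connectedComponentIn F x) := by
  refine isClosed_of_closure_subset fun y hy => ?_
  have hx : x ∈ F := connectedComponentIn_nonempty_iff.mp (closure_nonempty_iff.mp ⟨y, hy⟩)
  exact isPreconnected_connectedComponentIn.closure.subset_connectedComponentIn
    (subset_closure (mem_connectedComponentIn hx))
    (closure_minimal (connectedComponentIn_subset F x) hF) hy

theorem exists_isClopen_of_connectedComponent_subset {X : Type*} [TopologicalSpace X]
    [T2Space X] [CompactSpace X] {x : X} {U : Set X} (hU : IsOpen U)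
    (hxU : connectedComponent x ⊆ U) : ∃ Z, IsClopen Z ∧ x ∈ Z ∧ Z ⊆ U := by
  let N := { Z : Set X // IsClopen Z ∧ x ∈ Z }
  have : Nonempty N := ⟨⟨univ, isClopen_univ, mem_univ x⟩⟩
  have hdir : Directed (· ⊇ ·) fun Z : N => Z.val := by
    rintro ⟨Z, hZ, hxZ⟩ ⟨W, hW, hxW⟩
    exact ⟨⟨Z ∩ W, hZ.inter hW, hxZ, hxW⟩, inter_subset_left, inter_subset_right⟩
  obtain ⟨⟨Z, hZ, hxZ⟩, hZU⟩ := exists_subset_nhds_of_compactSpace hdir (fun Z => Z.2.1.1)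
    fun y hy => hU.mem_nhds (hxU (connectedComponent_eq_iInter_isClopen x ▸ hy))
  exact ⟨Z, hZ, hxZ, hZU⟩

/-- Boundary bumping theorem. -/
theorem connectedComponentIn_inter_frontier_nonempty {X : Type*} [TopologicalSpace X]
    [T2Space X] [CompactSpace X] [ConnectedSpace X] {F : Set X} (hF : IsClosed F)
    (hFX : F ≠ univ) {x : X} (hx : x ∈ F) :
    (connectedComponentIn F x ∩ frontier F).Nonempty := by
  by_contra hempty
  have hint : connectedComponentIn F x ⊆ interior F := fun z hz => by
    by_contra hzi
    exact hempty ⟨z, hz, hF.frontier_eq ▸ ⟨connectedComponentIn_subset F x hz, hzi⟩⟩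
  have : CompactSpace F := isCompact_iff_compactSpace.mp hF.isCompact
  obtain ⟨Z, hZ, hxZ, hZint⟩ := exists_isClopen_of_connectedComponent_subset (x := ⟨x, hx⟩)
    (isOpen_interior.preimage continuous_subtype_val)
    (fun z hz => hint (connectedComponentIn_eq_image hx ▸ mem_image_of_mem _ hz))
  obtain ⟨V, hV, rfl⟩ := isOpen_induced_iff.mp hZ.isOpen
  -- `Z` lies in `interior F`, where the topology of `F` agrees with that of `X`.
  have hopen : Subtype.val '' (Subtype.val ⁻¹' V : Set F) = V ∩ interior F := by
    refine Subset.antisymm (fun _ ⟨z, hz, hzy⟩ => hzy ▸ ⟨hz, hZint hz⟩) ?_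
    rintro y ⟨hyV, hyF⟩
    exact ⟨⟨y, interior_subset hyF⟩, hyV, rfl⟩
  have hclopen : IsClopen (Subtype.val '' (Subtype.val ⁻¹' V : Set F)) :=
    ⟨(hZ.isClosed.isCompact.image continuous_subtype_val).isClosed,
      hopen ▸ hV.inter isOpen_interior⟩
  refine hFX (eq_univ_of_univ_subset ?_)
  rw [← hclopen.eq_univ ⟨x, _, hxZ, rfl⟩]
  exact image_subset_range _ _ |>.trans Subtype.range_coe.subset

theorem finite_const_le_measure_connectedComponentIn {X : Type*} [TopologicalSpace X]
    [MeasurableSpace X] [OpensMeasurableSpace X] (μ : Measure X) {F : Set X} (hF : IsClosed F)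
    (hμF : μ F ≠ ∞) {ε : ℝ≥0∞} (hε : 0 < ε) :
    {D ∈ range (connectedComponentIn F) | ε ≤ μ D}.Finite := by
  have hdisj : Pairwise (Disjoint on fun D : range (connectedComponentIn F) => (D : Set X)) := by
    rintro ⟨_, x, rfl⟩ ⟨_, y, rfl⟩ hne
    refine disjoint_left.mpr fun z hzx hzy => hne (Subtype.ext ?_)
    exact (connectedComponentIn_eq hzx).trans (connectedComponentIn_eq hzy).symm
  have hunion : μ (⋃ D : range (connectedComponentIn F), (D : Set X)) ≠ ∞ :=
    ne_top_of_le_ne_top hμF (measure_mono (iUnion_subset fun ⟨_, x, rfl⟩ =>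
      connectedComponentIn_subset F x))
  refine ((Measure.finite_const_le_meas_of_disjoint_iUnion μ hε
    (fun ⟨_, x, rfl⟩ => (hF.connectedComponentIn x).measurableSet) hdisj hunion).image
    Subtype.val).subset ?_
  rintro D ⟨hD, hεD⟩
  exact ⟨⟨D, hD⟩, hεD, rfl⟩

theorem connectedComponentIn_mem_nhds_of_finite_image {X : Type*} [TopologicalSpace X]
    {F V : Set X} {x : X} (hF : IsClosed F) (hV : V ∈ 𝓝 x) (hVF : V ⊆ F)
    (hfin : (connectedComponentIn F '' V).Finite) : connectedComponentIn F x ∈ 𝓝 x := by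
  set others := connectedComponentIn F '' V \ {connectedComponentIn F x}
  have hx : x ∉ ⋃₀ others := by
    rintro ⟨_, ⟨⟨y, -, rfl⟩, hne⟩, hxy⟩
    exact hne (connectedComponentIn_eq hxy)
  have hclosed : IsClosed (⋃₀ others) := sUnion_eq_biUnion (s := others) ▸
    hfin.sdiff.isClosed_biUnion fun _ ⟨⟨y, _, hy⟩, _⟩ => hy ▸ hF.connectedComponentIn y
  refine mem_of_superset (inter_mem hV (hclosed.isOpen_compl.mem_nhds hx)) ?_
  rintro y ⟨hyV, hy⟩
  have hyC := mem_connectedComponentIn (hVF hyV)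
  by_contra hyx
  exact hy ⟨_, ⟨mem_image_of_mem _ hyV, fun h => hyx (mem_singleton_iff.mp h ▸ hyC)⟩, hyC⟩

theorem ofReal_half_le_hausdorffMeasure_connectedComponentIn_closedBall {X : Type*}
    [MetricSpace X] [MeasurableSpace X] [BorelSpace X] [CompactSpace X] [ConnectedSpace X]
    {x y : X} {r : ℝ} (hX : closedBall x r ≠ univ) (hy : y ∈ ball x (r / 2)) :
    ENNReal.ofReal (r / 2) ≤ μH[1] (connectedComponentIn (closedBall x r) y) := by
  have hyF : y ∈ closedBall x r :=
    closedBall_subset_closedBall (by linarith [dist_nonneg.trans_lt hy]) (ball_subset_closedBall hy)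
  obtain ⟨z, hzC, hzS⟩ :=
    connectedComponentIn_inter_frontier_nonempty isClosed_closedBall hX hyF
  have hyz : r / 2 ≤ dist y z := by
    have hzx : dist z x = r := frontier_closedBall_subset_sphere hzS
    linarith [dist_triangle z y x, dist_comm z y, mem_ball.mp hy]
  calc ENNReal.ofReal (r / 2) ≤ edist y z := by
        rw [edist_dist]; exact ENNReal.ofReal_le_ofReal hyz
    _ ≤ ediam (connectedComponentIn (closedBall x r) y) :=
      edist_le_ediam_of_mem (mem_connectedComponentIn hyF) hzC
    _ ≤ _ := isPreconnected_connectedComponentIn.ediam_le_hausdorffMeasure_one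

/-- A compact connected metric space of finite one-dimensional Hausdorff
measure is locally connected, i.e. a Peano continuum. -/
theorem compact_connected_finite_H1_locallyConnected
    (K : Type*) [MetricSpace K] [MeasurableSpace K] [BorelSpace K]
    [CompactSpace K] [ConnectedSpace K]
    (h : μH[1] (Set.univ : Set K) < ⊤) :
    LocallyConnectedSpace K := by
  rw [locallyConnectedSpace_iff_connected_subsets]
  intro x U hU
  obtain ⟨r, hr, hrU⟩ := nhds_basis_closedBall.mem_iff.mp hU
  by_cases hK : closedBall x r = univ
  · exact ⟨univ, univ_mem, isPreconnected_univ, hK ▸ hrU⟩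
  have hball : ball x (r / 2) ⊆ closedBall x r :=
    ball_subset_closedBall.trans (closedBall_subset_closedBall (by linarith))
  have hfin : (connectedComponentIn (closedBall x r) '' ball x (r / 2)).Finite :=
    (finite_const_le_measure_connectedComponentIn μH[1] isClosed_closedBall
      (ne_top_of_le_ne_top h.ne (measure_mono (subset_univ _)))
      (ENNReal.ofReal_pos.mpr (half_pos hr))).subset <| by
      rintro _ ⟨y, hy, rfl⟩
      exact ⟨mem_range_self y,
        ofReal_half_le_hausdorffMeasure_connectedComponentIn_closedBall hK hy⟩
  exact ⟨_, connectedComponentIn_mem_nhds_of_finite_image isClosed_closedBall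
    (ball_mem_nhds x (half_pos hr)) hball hfin, isPreconnected_connectedComponentIn,
    (connectedComponentIn_subset _ _).trans hrU⟩
end
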